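/- arXiv:1903.06941 — 2 statements merged into one kernel-verified Lean document; each statement's English description precedes it below -/
import Mathlib

section
/- Let N ≥ 2 and let h: [0,1] → [0,1] be a quasisymmetric homeomorphism. Then the grid h(𝒟_N), whose level-k family is {h(P) : P ∈ 𝒟_N^k}, is a C-quasisymmetric good grid on ([0,1], Lebesgue measure) for some constant C ≥ 1. -/
open MeasureTheory ENNReal Set

noncomputable section

namespace BesovPaper

variable {I : Type*}

/-- A quasi-metric on `I` with quasi-triangle constant `Cρ`. -/
structure IsQuasiMetric (ρ : I → I → ℝ) (Cρ : ℝ) : Prop where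
  one_le : 1 ≤ Cρ
  refl : ∀ x, ρ x x = 0
  pos : ∀ x y, x ≠ y → 0 < ρ x y
  symm : ∀ x y, ρ x y = ρ y x
  triangle : ∀ x y z, ρ x z ≤ Cρ * (ρ x y + ρ y z)

/-- quasi-ball -/
def qball (ρ : I → I → ℝ) (x : I) (r : ℝ) : Set I := {y | ρ x y < r}

/-- diameter with respect to a quasi-metric -/
def qdiam (ρ : I → I → ℝ) (S : Set I) : ℝ :=
  sSup ((fun pr : I × I => ρ pr.1 pr.2) '' (S ×ˢ S))

/-- distance from a point to a set -/
def qdistSet (ρ : I → I → ℝ) (x : I) (S : Set I) : ℝ := sInf ((ρ x) '' S)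

/-- Two quasi-metrics are power-law equivalent. -/
def PowerLawEquiv (ρ ρ' : I → I → ℝ) : Prop :=
  ∃ γ : ℝ, 0 < γ ∧ ∃ C : ℝ, 1 ≤ C ∧ ∀ x y,
    C⁻¹ * ρ x y ^ γ ≤ ρ' x y ∧ ρ' x y ≤ C * ρ x y ^ γ

/-- Ahlfors regular quasi-metric (measure) space with regularity exponent `D`,
constant `CA` and scale `r0`. -/
structure IsAhlfors [MeasurableSpace I] (d : I → I → ℝ) (m : Measure I)
    (D CA r0 : ℝ) : Prop where
  quasi : ∃ Cd : ℝ, IsQuasiMetric d Cd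
  D_pos : 0 < D
  CA_one_le : 1 ≤ CA
  r0_pos : 0 < r0
  lower : ∀ x : I, ∀ r : ℝ, 0 < r → r ≤ r0 →
    ENNReal.ofReal (CA⁻¹ * r ^ D) ≤ m (qball d x r)
  upper : ∀ x : I, ∀ r : ℝ, 0 < r → r ≤ r0 →
    m (qball d x r) ≤ ENNReal.ofReal (CA * r ^ D)

/-- A grid : a sequence of finite families of measurable sets of positive measure,
each being a partition of `I` up to measure zero, nested, and generating the σ-algebra. -/
structure IsGrid [inst : MeasurableSpace I] (m : Measure I) (P : ℕ → Set (Set I)) : Prop where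
  total_finite : m Set.univ ≠ ∞
  finite : ∀ k, (P k).Finite
  measurable : ∀ k, ∀ Q ∈ P k, MeasurableSet Q
  pos : ∀ k, ∀ Q ∈ P k, 0 < m Q
  cover : ∀ k, m (Set.univ \ ⋃ Q ∈ P k, Q) = 0
  ae_disjoint : ∀ k, ∀ Q ∈ P k, ∀ R ∈ P k, Q ≠ R → m (Q ∩ R) = 0
  nested : ∀ k, ∀ Q ∈ P (k + 1), ∃ R ∈ P k, Q ⊆ R
  generates : MeasurableSpace.generateFrom (⋃ k, P k) = inst

/-- A good grid with constants `0 < lamhat ≤ lam < 1`. -/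
structure IsGoodGrid [MeasurableSpace I] (m : Measure I) (P : ℕ → Set (Set I))
    (lamhat lam : ℝ) extends IsGrid m P : Prop where
  lamhat_pos : 0 < lamhat
  lamhat_le : lamhat ≤ lam
  lam_lt_one : lam < 1
  ratio : ∀ k, ∀ Q ∈ P (k + 1), ∀ R ∈ P k, Q ⊆ R →
    ENNReal.ofReal lamhat * m R ≤ m Q ∧ m Q ≤ ENNReal.ofReal lam * m R

/-- A good grid adapted to a quasi-metric `α`, with exponent `η`, constants
`c1, c2, c3, C ≥ 0` and contraction ratio `κ ∈ (0,1)`. -/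
structure IsAdaptedGrid [MeasurableSpace I] (m : Measure I) (P : ℕ → Set (Set I))
    (α : I → I → ℝ) (η c1 c2 c3 C κ : ℝ) : Prop where
  eta_pos : 0 < η
  c1_nonneg : 0 ≤ c1
  c2_nonneg : 0 ≤ c2
  c3_nonneg : 0 ≤ c3
  C_nonneg : 0 ≤ C
  kappa_pos : 0 < κ
  kappa_lt_one : κ < 1
  inner_ball : ∀ k : ℕ, 1 ≤ k → ∀ Q ∈ P k, ∃ z ∈ Q, qball α z (c1 * κ ^ k) ⊆ Q
  diam_le : ∀ k : ℕ, 1 ≤ k → ∀ Q ∈ P k, qdiam α Q ≤ c2 * κ ^ k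
  bdry : ∀ k : ℕ, 1 ≤ k → ∀ Q ∈ P k, ∀ t : ℝ, 0 < t →
    m {x | x ∈ Q ∧ qdistSet α x Qᶜ ≤ c3 * t * κ ^ k} ≤ ENNReal.ofReal (C * t ^ η) * m Q

/-- The canonical `(s,p)`-Souza atom on `Q`. -/
def souzaAtom [MeasurableSpace I] (m : Measure I) (s p : ℝ) (Q : Set I) : I → ℂ :=
  fun x => ((m Q).toReal ^ (s - 1 / p) : ℝ) • Q.indicator (fun _ => (1 : ℂ)) x

/-- The level-`k` part of an atomic series with coefficients `c`. -/
def levelSum [MeasurableSpace I] (m : Measure I) (P : ℕ → Set (Set I)) (s p : ℝ)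
    (c : ℕ → Set I → ℂ) (k : ℕ) : I → ℂ :=
  fun x => ∑' Q : P k, c k Q * souzaAtom m s p Q x

/-- The `ℓ^q(ℓ^p)` norm of a coefficient family. -/
def coefNorm (P : ℕ → Set (Set I)) (p : ℝ) (q : ℝ≥0∞) (c : ℕ → Set I → ℂ) : ℝ≥0∞ :=
  if q = ∞ then ⨆ k, (∑' Q : P k, (‖c k Q‖₊ : ℝ≥0∞) ^ p) ^ (1 / p)
  else (∑' k, (∑' Q : P k, (‖c k Q‖₊ : ℝ≥0∞) ^ p) ^ (q.toReal / p)) ^ (1 / q.toReal)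

/-- `c` is a Besov representation of `f`: the atomic series converges absolutely in
`L^p` and its sum is `f` almost everywhere. -/
def IsBesovRepr [MeasurableSpace I] (m : Measure I) (P : ℕ → Set (Set I)) (s p : ℝ)
    (f : I → ℂ) (c : ℕ → Set I → ℂ) : Prop :=
  (∀ᵐ x ∂m, f x = ∑' k, levelSum m P s p c k x) ∧
  (∑' k, eLpNorm (levelSum m P s p c k) (ENNReal.ofReal p) m) ≠ ∞

/-- Membership in the Besov space `ℬ^s_{p,q}(𝒫)`. -/
def MemBesov [MeasurableSpace I] (m : Measure I) (P : ℕ → Set (Set I))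
    (s p : ℝ) (q : ℝ≥0∞) (f : I → ℂ) : Prop :=
  MemLp f (ENNReal.ofReal p) m ∧
  ∃ c : ℕ → Set I → ℂ, IsBesovRepr m P s p f c ∧ coefNorm P p q c ≠ ∞

/-- The Besov norm: infimum of coefficient norms over all representations. -/
def besovNorm [MeasurableSpace I] (m : Measure I) (P : ℕ → Set (Set I))
    (s p : ℝ) (q : ℝ≥0∞) (f : I → ℂ) : ℝ≥0∞ :=
  ⨅ (c : ℕ → Set I → ℂ) (_ : IsBesovRepr m P s p f c), coefNorm P p q c

/-- `k₀(Q)`: the first level of the grid containing an element inside `Q`. -/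
def gridIndex (P : ℕ → Set (Set I)) (Q : Set I) : ℕ :=
  sInf {k | ∃ R ∈ P k, R ⊆ Q}

/-- Lebesgue measure on the unit interval. -/
def mUI : Measure unitInterval := (volume : Measure unitInterval)

/-- The `N`-adic grid on `[0,1]`: level `k` consists of the closed intervals
`[i N^{-k}, (i+1) N^{-k}]`, `0 ≤ i < N^k`. -/
def dyadicGridN (N : ℕ) (k : ℕ) : Set (Set unitInterval) :=
  {Q | ∃ i : ℕ, i < N ^ k ∧
    Q = {x : unitInterval | (i : ℝ) / (N : ℝ) ^ k ≤ (x : ℝ) ∧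
      (x : ℝ) ≤ ((i : ℝ) + 1) / (N : ℝ) ^ k}}

/-- A grid of intervals on `[0,1]` is `Cqs`-quasisymmetric: elements of the same
level with touching closures have comparable lengths. -/
def IsQSGrid (P : ℕ → Set (Set unitInterval)) (Cqs : ℝ) : Prop :=
  1 ≤ Cqs ∧ (∀ k, ∀ Q ∈ P k, Q.OrdConnected) ∧
  ∀ k : ℕ, ∀ Q ∈ P k, ∀ R ∈ P k, (closure Q ∩ closure R).Nonempty →
    Cqs⁻¹ ≤ (mUI Q).toReal / (mUI R).toReal ∧
      (mUI Q).toReal / (mUI R).toReal ≤ Cqs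

/-- A self-map of the unit interval is quasisymmetric with constant `M`. -/
def QuasiSymmetricUI (h : unitInterval → unitInterval) (M : ℝ) : Prop :=
  1 ≤ M ∧ ∀ x y z : unitInterval,
    (y : ℝ) < (x : ℝ) → (x : ℝ) - (y : ℝ) = (z : ℝ) - (x : ℝ) →
      M⁻¹ ≤ ((h z : ℝ) - (h x : ℝ)) / ((h x : ℝ) - (h y : ℝ)) ∧
      ((h z : ℝ) - (h x : ℝ)) / ((h x : ℝ) - (h y : ℝ)) ≤ M

/-- A self-map of the unit interval is bi-Lipschitz with constant `L`. -/
def BiLipschitzUI (g : unitInterval → unitInterval) (L : ℝ) : Prop :=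
  1 ≤ L ∧ ∀ x y : unitInterval,
    L⁻¹ * |(x : ℝ) - (y : ℝ)| ≤ |(g x : ℝ) - (g y : ℝ)| ∧
    |(g x : ℝ) - (g y : ℝ)| ≤ L * |(x : ℝ) - (y : ℝ)|

/-- The image grid `h(𝒫)`. -/
def imageGrid (h : unitInterval → unitInterval)
    (P : ℕ → Set (Set unitInterval)) : ℕ → Set (Set unitInterval) :=
  fun k => (fun Q => h '' Q) '' P k

/-!
A homeomorphism of `[0,1]` is monotone or antitone, so it maps the `N`-adic interval
`[i N^{-k}, (i+1) N^{-k}]` onto the interval between the images of its endpoints, of length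
`ℓ_k(i) = |h((i+1) N^{-k}) - h(i N^{-k})|`. Quasisymmetry at three consecutive grid points says that
`ℓ_k(i)` and `ℓ_k(i+1)` agree up to the factor `M`: this is the quasisymmetry of the image grid,
and iterating it, the `N` children of an interval agree up to `M^{N-1}`. As their lengths add up
to the parent's, each child carries a fraction between `(N M^{N-1})⁻¹` and `(1 + M^{-(N-1)})⁻¹`
of it. The remaining grid axioms are transported through `h` from the `N`-adic grid, which
generates the Borel σ-algebra because the `N`-adic points are dense.
-/

end BesovPaper

theorem Monotone.biUnion_range_Icc {α : Type*} [LinearOrder α] {p : ℕ → α} (hp : Monotone p)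
    {n : ℕ} (hn : n ≠ 0) : ⋃ j ∈ Finset.range n, Icc (p j) (p (j + 1)) = Icc (p 0) (p n) := by
  induction n with
  | zero => exact absurd rfl hn
  | succ n ih =>
    rcases eq_or_ne n 0 with rfl | hn
    · simp
    rw [Finset.range_add_one, Finset.set_biUnion_insert, ih hn, union_comm,
      Icc_union_Icc_eq_Icc (hp n.zero_le) (hp n.le_succ)]

theorem le_pow_mul_of_forall_succ {a : ℕ → ℝ} {M : ℝ} {n : ℕ} (hM : 1 ≤ M)
    (ha : ∀ i, 0 ≤ a i) (h : ∀ i, i + 1 < n → a (i + 1) ≤ M * a i ∧ a i ≤ M * a (i + 1))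
    {i j d : ℕ} (hi : i < n) (hj : j < n) (hij : i ≤ j + d) (hji : j ≤ i + d) :
    a i ≤ M ^ d * a j := by
  have chain : ∀ i j, i ≤ j → j < n → a j ≤ M ^ (j - i) * a i ∧ a i ≤ M ^ (j - i) * a j := by
    intro i j hij hj
    induction j, hij using Nat.le_induction with
    | base => simp
    | succ j hij ih =>
      obtain ⟨ih₁, ih₂⟩ := ih (by omega)
      obtain ⟨h₁, h₂⟩ := h j hj
      rw [Nat.sub_add_comm hij, pow_succ']
      constructor
      · calc a (j + 1) ≤ M * a j := h₁
          _ ≤ M * (M ^ (j - i) * a i) := by gcongr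
          _ = _ := by ring
      · calc a i ≤ M ^ (j - i) * a j := ih₂
          _ ≤ M ^ (j - i) * (M * a (j + 1)) := by gcongr
          _ = _ := by ring
  rcases le_total i j with hle | hle
  · exact (chain i j hle hj).2.trans (by gcongr; exacts [ha j, by omega])
  · exact (chain j i hle hi).1.trans (by gcongr; exacts [ha j, by omega])

theorem MeasurableEquiv.generateFrom_image {α β : Type*} [mα : MeasurableSpace α]
    [mβ : MeasurableSpace β] (e : α ≃ᵐ β) {S : Set (Set α)}
    (hS : MeasurableSpace.generateFrom S = mα) :
    MeasurableSpace.generateFrom ((e '' ·) '' S) = mβ := by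
  have : (e '' · : Set α → Set β) = (e.symm ⁻¹' ·) := funext e.toEquiv.image_eq_preimage_symm
  rw [this, ← MeasurableSpace.comap_generateFrom, hS, e.symm.measurableEmbedding.comap_eq]

theorem Continuous.image_uIcc_of_injective {α δ : Type*} [ConditionallyCompleteLinearOrder α]
    [TopologicalSpace α] [OrderTopology α] [DenselyOrdered α] [BoundedOrder α] [LinearOrder δ]
    [TopologicalSpace δ] [OrderClosedTopology δ] {f : α → δ} (hf : Continuous f)
    (hinj : Function.Injective f) (a b : α) : f '' uIcc a b = uIcc (f a) (f b) := by
  rcases hf.strictMono_of_inj_boundedOrder' hinj with hmono | hanti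
  · exact hf.continuousOn.image_uIcc_of_monotoneOn (hmono.monotone.monotoneOn _)
  · exact hf.continuousOn.image_uIcc_of_antitoneOn (hanti.antitone.antitoneOn _)

theorem exists_nat_div_pow_mem_Ioo {N : ℕ} (hN : 1 < N) {x y : ℝ} (hx : 0 ≤ x) (hxy : x < y) :
    ∃ k i : ℕ, x < i / (N : ℝ) ^ k ∧ i / (N : ℝ) ^ k < y := by
  obtain ⟨k, hk⟩ := pow_unbounded_of_one_lt (y - x)⁻¹ (by exact_mod_cast hN : (1 : ℝ) < N)
  have hNk : (0 : ℝ) < (N : ℝ) ^ k := by positivity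
  have hgap : 1 < (y - x) * (N : ℝ) ^ k := by
    rwa [inv_lt_iff_one_lt_mul₀ (sub_pos.2 hxy), mul_comm] at hk
  refine ⟨k, ⌊x * (N : ℝ) ^ k⌋₊ + 1, ?_, ?_⟩
  · rw [lt_div_iff₀ hNk]; push_cast; exact Nat.lt_floor_add_one _
  · rw [div_lt_iff₀ hNk]; push_cast
    linarith [Nat.floor_le (mul_nonneg hx hNk.le)]

namespace BesovPaper

def gridPt (N k i : ℕ) : unitInterval := projIcc 0 1 zero_le_one ((i : ℝ) / (N : ℝ) ^ k)

def dyadicIcc (N k i : ℕ) : Set unitInterval := Icc (gridPt N k i) (gridPt N k (i + 1))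

section Dyadic

variable {N k : ℕ}

theorem gridPt_monotone (N k : ℕ) : Monotone (gridPt N k) :=
  (monotone_projIcc _).comp fun _ _ hij => by gcongr

theorem coe_gridPt (hN : 0 < N) {i : ℕ} (hi : i ≤ N ^ k) :
    (gridPt N k i : ℝ) = i / (N : ℝ) ^ k := by
  have hNk : (0 : ℝ) < (N : ℝ) ^ k := by positivity
  rw [gridPt, projIcc_of_mem _ ⟨by positivity, (div_le_one hNk).2 (by exact_mod_cast hi)⟩]

theorem gridPt_strictMonoOn (hN : 0 < N) (k : ℕ) : StrictMonoOn (gridPt N k) (Iic (N ^ k)) := by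
  intro i hi j hj hij
  rw [← Subtype.coe_lt_coe, coe_gridPt hN hi, coe_gridPt hN hj]
  gcongr

theorem gridPt_zero : gridPt N k 0 = 0 := by
  simp [gridPt]

theorem gridPt_pow (hN : 0 < N) : gridPt N k (N ^ k) = 1 :=
  Subtype.ext <| by rw [coe_gridPt hN le_rfl]; push_cast; exact div_self (by positivity)

theorem gridPt_succ_mul (hN : 0 < N) (k i : ℕ) : gridPt N (k + 1) (N * i) = gridPt N k i := by
  simp only [gridPt]
  congr 1
  push_cast
  rw [pow_succ, mul_comm, mul_div_mul_right _ _ (by positivity)]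

theorem dyadicGridN_eq_image (hN : 0 < N) (k : ℕ) :
    dyadicGridN N k = dyadicIcc N k '' Iio (N ^ k) := by
  ext Q
  refine exists_congr fun i => and_congr_right fun hi => ?_
  rw [eq_comm]
  refine Eq.congr_left (ext fun x => ?_)
  simp only [dyadicIcc, mem_Icc, mem_ofPred_eq, ← Subtype.coe_le_coe, coe_gridPt hN hi.le,
    coe_gridPt hN (Nat.succ_le_of_lt hi), Nat.cast_succ]

theorem iUnion_dyadicIcc_children (hN : 0 < N) (k i : ℕ) :
    ⋃ j ∈ Finset.range N, dyadicIcc N (k + 1) (N * i + j) = dyadicIcc N k i := by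
  have hmono : Monotone fun j => gridPt N (k + 1) (N * i + j) :=
    (gridPt_monotone N (k + 1)).comp fun _ _ h => Nat.add_le_add_left h _
  rw [dyadicIcc, ← gridPt_succ_mul hN k i, ← gridPt_succ_mul hN k (i + 1), mul_add_one]
  exact hmono.biUnion_range_Icc hN.ne'

theorem iUnion_dyadicIcc (hN : 0 < N) (k : ℕ) :
    ⋃ i ∈ Finset.range (N ^ k), dyadicIcc N k i = univ := by
  simp only [dyadicIcc]
  rw [(gridPt_monotone N k).biUnion_range_Icc (pow_pos hN k).ne', gridPt_zero, gridPt_pow hN]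
  exact eq_univ_of_forall fun x => ⟨x.2.1, x.2.2⟩

theorem dyadicIcc_inter_subsingleton {i j : ℕ} (hij : i ≠ j) :
    (dyadicIcc N k i ∩ dyadicIcc N k j).Subsingleton := by
  wlog h : i < j generalizing i j
  · rw [inter_comm]; exact this hij.symm (lt_of_le_of_ne (not_lt.1 h) hij.symm)
  refine (subsingleton_singleton (a := gridPt N k j)).anti fun x ⟨⟨_, hxi⟩, ⟨hxj, _⟩⟩ => ?_
  exact le_antisymm (hxi.trans (gridPt_monotone N k h)) hxj

theorem le_succ_of_dyadicIcc_inter_nonempty (hN : 0 < N) {i j : ℕ} (hi : i < N ^ k)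
    (hj : j < N ^ k) (h : (dyadicIcc N k i ∩ dyadicIcc N k j).Nonempty) : j ≤ i + 1 := by
  obtain ⟨x, ⟨_, hxi⟩, ⟨hxj, _⟩⟩ := h
  exact ((gridPt_strictMonoOn hN k).le_iff_le hj.le hi).1 (hxj.trans hxi)

theorem mul_add_le_pow_succ {i : ℕ} (hi : i < N ^ k) : N * i + N ≤ N ^ (k + 1) := by
  rw [← mul_add_one, pow_succ']
  exact Nat.mul_le_mul_left N hi

theorem exists_eq_mul_add_of_dyadicIcc_subset (hN : 0 < N) {m i : ℕ} (hm : m < N ^ (k + 1))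
    (hi : i < N ^ k) (h : dyadicIcc N (k + 1) m ⊆ dyadicIcc N k i) : ∃ j < N, m = N * i + j := by
  have hmem : gridPt N (k + 1) m ∈ dyadicIcc N k i :=
    h (left_mem_Icc.2 (gridPt_monotone _ _ m.le_succ))
  have hmem' : gridPt N (k + 1) (m + 1) ∈ dyadicIcc N k i :=
    h (right_mem_Icc.2 (gridPt_monotone _ _ m.le_succ))
  rw [dyadicIcc, ← gridPt_succ_mul hN k i, ← gridPt_succ_mul hN k (i + 1), mul_add_one]
    at hmem hmem'
  have hmono := gridPt_strictMonoOn hN (k + 1)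
  have hbound := mul_add_le_pow_succ hi
  have hlow : N * i ≤ m := by
    by_contra! hlt
    exact (hmem.1.trans_lt (hmono (mem_Iic.2 (by omega)) (mem_Iic.2 (by omega)) hlt)).false
  have hupp : m + 1 ≤ N * i + N := by
    by_contra! hlt
    exact (hmem'.2.trans_lt (hmono (mem_Iic.2 (by omega)) (mem_Iic.2 (by omega)) hlt)).false
  exact ⟨m - N * i, by omega, by omega⟩

theorem measurableSet_Iic_gridPt (hN : 0 < N) {i : ℕ} (hi0 : i ≠ 0) (hi : i ≤ N ^ k) :
    MeasurableSet[MeasurableSpace.generateFrom (⋃ k, dyadicGridN N k)] (Iic (gridPt N k i)) := by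
  have hunion : Iic (gridPt N k i) = ⋃ j ∈ Finset.range i, dyadicIcc N k j := by
    simp only [dyadicIcc]
    rw [(gridPt_monotone N k).biUnion_range_Icc hi0, gridPt_zero]
    exact Icc_bot.symm
  rw [hunion]
  refine Finset.measurableSet_biUnion _ fun j hj => .basic _ (mem_iUnion.2 ⟨k, ?_⟩)
  rw [dyadicGridN_eq_image hN]
  exact mem_image_of_mem _ ((Finset.mem_range.1 hj).trans_le hi)

theorem generateFrom_dyadicGridN (hN : 1 < N) :
    MeasurableSpace.generateFrom (⋃ k, dyadicGridN N k) =
      (inferInstance : MeasurableSpace unitInterval) := by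
  refine le_antisymm (MeasurableSpace.generateFrom_le ?_) ?_
  · intro Q hQ
    obtain ⟨k, hQ⟩ := mem_iUnion.1 hQ
    rw [dyadicGridN_eq_image (by omega)] at hQ
    obtain ⟨i, -, rfl⟩ := hQ
    exact measurableSet_Icc
  rw [BorelSpace.measurable_eq (α := unitInterval), borel_eq_generateFrom_Iio]
  refine MeasurableSpace.generateFrom_le ?_
  rintro _ ⟨c, rfl⟩
  have hIio : Iio c = ⋃ (k : ℕ) (i : ℕ) (_ : i ≠ 0 ∧ i ≤ N ^ k ∧ gridPt N k i < c),
      Iic (gridPt N k i) := by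
    ext x
    simp only [mem_Iio, mem_iUnion, mem_Iic, exists_prop]
    constructor
    · intro hx
      obtain ⟨k, i, hxi, hic⟩ := exists_nat_div_pow_mem_Ioo hN x.2.1 hx
      have hi : i ≤ N ^ k := by
        have := hic.trans_le c.2.2
        rw [div_lt_one (by positivity)] at this
        exact_mod_cast this.le
      have hi0 : i ≠ 0 := by
        rintro rfl
        simp only [CharP.cast_eq_zero, zero_div] at hxi
        exact hxi.not_ge x.2.1
      rw [← coe_gridPt (by omega) hi] at hxi hic
      exact ⟨k, i, ⟨hi0, hi, hic⟩, hxi.le⟩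
    · rintro ⟨k, i, ⟨-, -, hic⟩, hxi⟩
      exact hxi.trans_lt hic
  rw [hIio]
  exact .iUnion fun k => .iUnion fun i => .iUnion fun hi =>
    measurableSet_Iic_gridPt (by omega) hi.1 hi.2.1

end Dyadic

theorem QuasiSymmetricUI.dist_le {g : unitInterval → unitInterval} {M : ℝ}
    (hg : QuasiSymmetricUI g M) {x y z : unitInterval} (hyx : (y : ℝ) < x)
    (hxyz : (x : ℝ) - y = z - x) :
    dist (g x) (g z) ≤ M * dist (g y) (g x) ∧ dist (g y) (g x) ≤ M * dist (g x) (g z) := by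
  obtain ⟨hlow, hupp⟩ := hg.2 x y z hyx hxyz
  set r := ((g z : ℝ) - g x) / ((g x : ℝ) - g y)
  have hM : 0 < M := zero_lt_one.trans_le hg.1
  have hr : 0 < r := (inv_pos.2 hM).trans_le hlow
  have hne : (g x : ℝ) - g y ≠ 0 := fun h0 => hr.ne' (by simp [r, h0])
  have hdist : dist (g x) (g z) = r * dist (g y) (g x) := by
    rw [Subtype.dist_eq, Subtype.dist_eq, Real.dist_eq, Real.dist_eq, abs_sub_comm,
      abs_sub_comm (g y : ℝ), ← abs_of_pos hr, ← abs_mul, div_mul_cancel₀ _ hne]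
  rw [hdist]
  constructor
  · gcongr
  · calc dist (g y) (g x) = M * (M⁻¹ * dist (g y) (g x)) := by field_simp
      _ ≤ M * (r * dist (g y) (g x)) := by gcongr

section Image

variable (h : unitInterval ≃ₜ unitInterval) {N k : ℕ}

def gridLen (f : unitInterval → unitInterval) (N k i : ℕ) : ℝ := mUI.real (f '' dyadicIcc N k i)

theorem image_dyadicIcc (i : ℕ) :
    h '' dyadicIcc N k i = uIcc (h (gridPt N k i)) (h (gridPt N k (i + 1))) := by
  rw [dyadicIcc, ← uIcc_of_le (gridPt_monotone N k i.le_succ),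
    h.continuous.image_uIcc_of_injective h.injective]

theorem measurableSet_image_dyadicIcc (i : ℕ) : MeasurableSet (h '' dyadicIcc N k i) := by
  rw [image_dyadicIcc]
  exact measurableSet_uIcc

theorem mUI_image_dyadicIcc_inter {i j : ℕ} (hij : i ≠ j) :
    mUI (h '' dyadicIcc N k i ∩ h '' dyadicIcc N k j) = 0 := by
  rw [← image_inter h.injective]
  exact ((dyadicIcc_inter_subsingleton hij).image h).measure_zero (volume : Measure unitInterval)

theorem gridLen_eq_dist (i : ℕ) :
    gridLen h N k i = dist (h (gridPt N k i)) (h (gridPt N k (i + 1))) := by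
  rw [gridLen, image_dyadicIcc, measureReal_def, mUI, unitInterval.volume_uIcc, edist_dist,
    ENNReal.toReal_ofReal dist_nonneg, dist_comm]

theorem gridLen_pos (hN : 0 < N) {i : ℕ} (hi : i < N ^ k) : 0 < gridLen h N k i := by
  rw [gridLen_eq_dist]
  exact dist_pos.2 (h.injective.ne ((gridPt_strictMonoOn hN k (mem_Iic.2 hi.le)
    (mem_Iic.2 hi) i.lt_succ_self).ne))

theorem gridLen_eq_sum_children (hN : 0 < N) (i : ℕ) :
    gridLen h N k i = ∑ j ∈ Finset.range N, gridLen h N (k + 1) (N * i + j) := by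
  rw [gridLen, ← iUnion_dyadicIcc_children hN, image_iUnion₂]
  refine measureReal_biUnion_finset₀ (fun j _ j' _ hjj' => ?_)
    (fun j _ => (measurableSet_image_dyadicIcc h _).nullMeasurableSet)
    (fun j _ => measure_ne_top (volume : Measure unitInterval) _)
  exact mUI_image_dyadicIcc_inter h (by omega)

variable {h} {M : ℝ}

theorem gridLen_succ_le (hN : 0 < N) (hqs : QuasiSymmetricUI h M) {i : ℕ} (hi : i + 1 < N ^ k) :
    gridLen h N k (i + 1) ≤ M * gridLen h N k i ∧ gridLen h N k i ≤ M * gridLen h N k (i + 1) := by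
  simp only [gridLen_eq_dist]
  refine hqs.dist_le ?_ ?_
  · exact gridPt_strictMonoOn hN k (mem_Iic.2 (by omega)) (mem_Iic.2 (by omega)) i.lt_succ_self
  · rw [coe_gridPt hN (by omega), coe_gridPt hN (by omega), coe_gridPt hN hi]
    push_cast
    ring

theorem gridLen_le_pow_mul (hN : 0 < N) (hqs : QuasiSymmetricUI h M) {i j d : ℕ}
    (hi : i < N ^ k) (hj : j < N ^ k) (hij : i ≤ j + d) (hji : j ≤ i + d) :
    gridLen h N k i ≤ M ^ d * gridLen h N k j :=
  le_pow_mul_of_forall_succ (a := gridLen h N k) hqs.1 (fun _ => measureReal_nonneg)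
    (fun _ hi => gridLen_succ_le hN hqs hi) hi hj hij hji

theorem gridLen_children_bounds (hN : 2 ≤ N) (hqs : QuasiSymmetricUI h M) {i j : ℕ}
    (hi : i < N ^ k) (hj : j < N) :
    ((N : ℝ) * M ^ (N - 1))⁻¹ * gridLen h N k i ≤ gridLen h N (k + 1) (N * i + j) ∧
      gridLen h N (k + 1) (N * i + j) ≤ (1 + (M ^ (N - 1))⁻¹)⁻¹ * gridLen h N k i := by
  set A := M ^ (N - 1)
  have hA : 1 ≤ A := one_le_pow₀ hqs.1
  have hbound := mul_add_le_pow_succ hi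
  have hsib : ∀ j₁ < N, ∀ j₂ < N,
      gridLen h N (k + 1) (N * i + j₁) ≤ A * gridLen h N (k + 1) (N * i + j₂) :=
    fun j₁ _ j₂ _ => gridLen_le_pow_mul (by omega) hqs (by omega) (by omega) (by omega) (by omega)
  rw [gridLen_eq_sum_children h (by omega)]
  constructor
  · rw [inv_mul_le_iff₀ (by positivity), mul_assoc]
    have := Finset.sum_le_card_nsmul _ _ _ fun j' hj' => hsib j' (Finset.mem_range.1 hj') j hj
    rwa [Finset.card_range, nsmul_eq_mul] at this
  · obtain ⟨j', hj', hjj'⟩ : ∃ j' < N, j ≠ j' :=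
      ⟨if j = 0 then 1 else 0, by split_ifs <;> omega, by split_ifs <;> omega⟩
    have hpair := Finset.add_le_sum (f := fun j => gridLen h N (k + 1) (N * i + j))
      (fun _ _ => measureReal_nonneg) (Finset.mem_range.2 hj) (Finset.mem_range.2 hj') hjj'
    have hcomp : A⁻¹ * gridLen h N (k + 1) (N * i + j) ≤ gridLen h N (k + 1) (N * i + j') := by
      rw [inv_mul_le_iff₀ (by positivity)]
      exact hsib j hj j' hj'
    rw [inv_mul_eq_div, le_div_iff₀ (by positivity)]
    linarith

end Image

section ImageGrid

variable (h : unitInterval ≃ₜ unitInterval) {N : ℕ}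

theorem imageGrid_dyadicGridN (hN : 0 < N) (k : ℕ) :
    imageGrid h (dyadicGridN N) k = (fun i => h '' dyadicIcc N k i) '' Iio (N ^ k) := by
  rw [imageGrid, dyadicGridN_eq_image hN, image_image]

theorem mem_imageGrid_dyadicGridN (hN : 0 < N) {k : ℕ} {Q : Set unitInterval} :
    Q ∈ imageGrid h (dyadicGridN N) k ↔ ∃ i < N ^ k, h '' dyadicIcc N k i = Q := by
  rw [imageGrid_dyadicGridN h hN]
  rfl

theorem mUI_image_dyadicIcc (k i : ℕ) :
    mUI (h '' dyadicIcc N k i) = ENNReal.ofReal (gridLen h N k i) :=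
  (ofReal_measureReal (measure_ne_top (volume : Measure unitInterval) _)).symm

theorem isGrid_imageGrid (hN : 1 < N) : IsGrid mUI (imageGrid h (dyadicGridN N)) where
  total_finite := measure_ne_top (volume : Measure unitInterval) _
  finite k := by
    rw [imageGrid_dyadicGridN h (by omega)]
    exact (finite_Iio _).image _
  measurable k Q hQ := by
    obtain ⟨i, -, rfl⟩ := (mem_imageGrid_dyadicGridN h (by omega)).1 hQ
    exact measurableSet_image_dyadicIcc h i
  pos k Q hQ := by
    obtain ⟨i, hi, rfl⟩ := (mem_imageGrid_dyadicGridN h (by omega)).1 hQ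
    exact (ENNReal.toReal_pos_iff.1 (gridLen_pos h (by omega) hi)).1
  cover k := by
    have hunion : ⋃ Q ∈ imageGrid h (dyadicGridN N) k, Q = univ := by
      rw [imageGrid_dyadicGridN h (by omega), biUnion_image, ← image_iUnion₂,
        ← image_univ_of_surjective h.surjective, ← iUnion_dyadicIcc (N := N) (by omega) k]
      simp only [mem_Iio, Finset.mem_range]
    simp [hunion]
  ae_disjoint k Q hQ R hR hQR := by
    obtain ⟨i, -, rfl⟩ := (mem_imageGrid_dyadicGridN h (by omega)).1 hQ
    obtain ⟨j, -, rfl⟩ := (mem_imageGrid_dyadicGridN h (by omega)).1 hR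
    exact mUI_image_dyadicIcc_inter h fun hij => hQR (hij ▸ rfl)
  nested k Q hQ := by
    obtain ⟨m, hm, rfl⟩ := (mem_imageGrid_dyadicGridN h (by omega)).1 hQ
    refine ⟨h '' dyadicIcc N k (m / N), (mem_imageGrid_dyadicGridN h (by omega)).2
      ⟨m / N, ?_, rfl⟩, image_mono ?_⟩
    · rwa [Nat.div_lt_iff_lt_mul (by omega), ← pow_succ]
    · rw [← iUnion_dyadicIcc_children (by omega) k (m / N)]
      conv_lhs => rw [← Nat.div_add_mod m N]
      exact Finset.subset_set_biUnion_of_mem (f := fun j => dyadicIcc N (k + 1) (N * (m / N) + j))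
        (Finset.mem_range.2 (Nat.mod_lt m (by omega)))
  generates := by
    rw [show ⋃ k, imageGrid h (dyadicGridN N) k = (h '' ·) '' ⋃ k, dyadicGridN N k from
      (image_iUnion).symm]
    exact h.toMeasurableEquiv.generateFrom_image (generateFrom_dyadicGridN hN)

variable {h} {M : ℝ}

theorem isGoodGrid_imageGrid (hN : 2 ≤ N) (hqs : QuasiSymmetricUI h M) :
    IsGoodGrid mUI (imageGrid h (dyadicGridN N))
      ((N : ℝ) * M ^ (N - 1))⁻¹ (1 + (M ^ (N - 1))⁻¹)⁻¹ where
  toIsGrid := isGrid_imageGrid h (by omega)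
  lamhat_pos := by have := hqs.1; positivity
  lamhat_le := by
    have hA : 1 ≤ M ^ (N - 1) := one_le_pow₀ hqs.1
    have hN' : (2 : ℝ) ≤ N := by exact_mod_cast hN
    gcongr
    nlinarith [inv_le_one_of_one_le₀ hA]
  lam_lt_one := by
    have : 0 < (M ^ (N - 1))⁻¹ := by have := hqs.1; positivity
    exact inv_lt_one_of_one_lt₀ (by linarith)
  ratio k Q hQ R hR hQR := by
    obtain ⟨m, hm, rfl⟩ := (mem_imageGrid_dyadicGridN h (by omega)).1 hQ
    obtain ⟨i, hi, rfl⟩ := (mem_imageGrid_dyadicGridN h (by omega)).1 hR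
    obtain ⟨j, hj, rfl⟩ := exists_eq_mul_add_of_dyadicIcc_subset (by omega) hm hi
      ((image_subset_image_iff h.injective).1 hQR)
    obtain ⟨hlow, hupp⟩ := gridLen_children_bounds hN hqs hi hj
    have hM : 1 ≤ M := hqs.1
    rw [mUI_image_dyadicIcc, mUI_image_dyadicIcc, ← ENNReal.ofReal_mul (by positivity),
      ← ENNReal.ofReal_mul (by positivity)]
    exact ⟨ENNReal.ofReal_le_ofReal hlow, ENNReal.ofReal_le_ofReal hupp⟩

theorem isQSGrid_imageGrid (hN : 0 < N) (hqs : QuasiSymmetricUI h M) :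
    IsQSGrid (imageGrid h (dyadicGridN N)) M := by
  refine ⟨hqs.1, fun k Q hQ => ?_, fun k Q hQ R hR hQR => ?_⟩
  · obtain ⟨i, -, rfl⟩ := (mem_imageGrid_dyadicGridN h hN).1 hQ
    rw [image_dyadicIcc]
    exact ordConnected_uIcc
  obtain ⟨i, hi, rfl⟩ := (mem_imageGrid_dyadicGridN h hN).1 hQ
  obtain ⟨j, hj, rfl⟩ := (mem_imageGrid_dyadicGridN h hN).1 hR
  have hclosed : ∀ i, IsClosed (h '' dyadicIcc N k i) :=
    fun i => (isCompact_Icc.image h.continuous).isClosed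
  rw [(hclosed i).closure_eq, (hclosed j).closure_eq, ← image_inter h.injective,
    image_nonempty] at hQR
  have hji := le_succ_of_dyadicIcc_inter_nonempty hN hi hj hQR
  have hij := le_succ_of_dyadicIcc_inter_nonempty hN hj hi (inter_comm _ _ ▸ hQR)
  have hM : 0 < M := zero_lt_one.trans_le hqs.1
  have hpos := gridLen_pos h hN hj
  change M⁻¹ ≤ gridLen h N k i / gridLen h N k j ∧ gridLen h N k i / gridLen h N k j ≤ M
  rw [le_div_iff₀ hpos, div_le_iff₀ hpos, inv_mul_le_iff₀ hM]
  rw [← pow_one M]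
  exact ⟨gridLen_le_pow_mul hN hqs hj hi (by omega) (by omega),
    gridLen_le_pow_mul hN hqs hi hj (by omega) (by omega)⟩

end ImageGrid

theorem statement_13
    (N : ℕ) (hN : 2 ≤ N)
    (h : unitInterval ≃ₜ unitInterval) (M : ℝ)
    (hqs : QuasiSymmetricUI h M) :
    ∃ (Cqs lamhat lam : ℝ),
      IsGoodGrid mUI (imageGrid h (dyadicGridN N)) lamhat lam ∧
      IsQSGrid (imageGrid h (dyadicGridN N)) Cqs :=
  ⟨M, _, _, isGoodGrid_imageGrid hN hqs, isQSGrid_imageGrid (by omega) hqs⟩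

end BesovPaper
end
end

section
/- Let I = [0,1] with Lebesgue measure, and let 𝒫_★ and 𝒫_∘ be quasisymmetric good grids such that every element of 𝒫_i^k contains exactly 2 elements of 𝒫_i^{k+1}, for i = ★, ∘ and every k. Let h_i: [0,1] → [0,1] be quasisymmetric homeomorphisms with h_i(𝒫_i) = 𝒟_2. For an interval Q set j_0^★(Q) = min{j ≥ 0 : there is P ∈ 𝒫_★^j with P̄ ⊂ Q̄}. If sup_k #{ j_0^★(Q) : Q ∈ 𝒫_∘^k } < ∞, then h_★ ∘ h_∘^{-1} is a bi-Lipschitz homeomorphism of [0,1]. -/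
open MeasureTheory ENNReal Set

noncomputable section

namespace BesovPaper

variable {I : Type*}

/-!
Write `G = h★ ∘ h∘⁻¹`. A cell of `𝒫∘^k` is `h∘⁻¹(I)` for a dyadic interval `I` of level `k`, and
its index `j₀★` is the first level of a dyadic interval inside `G(I)`, so `|G(I)| ≍ 2^(-j₀★)` up
to a factor `4`. Quasisymmetry of `h∘` makes the `h∘`-preimages of two adjacent dyadic intervals
of level `k` comparable, quasisymmetry of `h★` then makes their `G`-images comparable, so `j₀★`
changes by at most a constant `d` between neighbours. Since the lengths `|G(I)|` sum to `1`,
some `j₀★` is at most `k + 2` and some is at least `k`; a sequence with steps at most `d` taking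
at most `n` values spreads by at most `n d`, so every `j₀★` is within `n d + 2` of `k`. Hence
`|G(I)| ≍ 2^(-k)` uniformly, which makes `G` bi-Lipschitz. Decreasing homeomorphisms are reduced
to increasing ones by composing with `x ↦ 1 - x`.
-/

-- `QuasiSymmetricUI` for an increasing function on `[0, 1]`, with the ratio multiplied out.
structure IsIncreasingQS (F : ℝ → ℝ) (M : ℝ) : Prop where
  one_le : 1 ≤ M
  monotoneOn : MonotoneOn F (Icc 0 1)
  ratio : ∀ y x z : ℝ, 0 ≤ y → y < x → z ≤ 1 → x - y = z - x →
    M⁻¹ * (F x - F y) ≤ F z - F x ∧ F z - F x ≤ M * (F x - F y)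

namespace IsIncreasingQS

variable {F G : ℝ → ℝ} {M N : ℝ}

lemma pos (hF : IsIncreasingQS F M) : 0 < M := zero_lt_one.trans_le hF.one_le

lemma mono (hF : IsIncreasingQS F M) {x y : ℝ} (hx : 0 ≤ x) (hxy : x ≤ y) (hy : y ≤ 1) :
    F x ≤ F y :=
  hF.monotoneOn ⟨hx, hxy.trans hy⟩ ⟨hx.trans hxy, hy⟩ hxy

-- `x ↦ -F (1 - x)` exchanges the two sides of `ratio`; this transfers every estimate proved at
-- one end of an interval to the other end.
lemma reflect (hF : IsIncreasingQS F M) : IsIncreasingQS (fun x => -F (1 - x)) M where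
  one_le := hF.one_le
  monotoneOn x hx y hy hxy :=
    neg_le_neg (hF.mono (sub_nonneg.2 hy.2) (by linarith) (by linarith [hx.1]))
  ratio y x z hy hyx hz hgap := by
    obtain ⟨h1, h2⟩ := hF.ratio (1 - z) (1 - x) (1 - y) (by linarith) (by linarith)
      (by linarith) (by linarith)
    constructor
    · rw [inv_mul_le_iff₀ hF.pos]
      linarith
    · linarith [(inv_mul_le_iff₀ hF.pos).1 h1]

lemma sub_le_one_add_mul_sub_midpoint (hF : IsIncreasingQS F M) {u w : ℝ} (hu : 0 ≤ u)
    (huw : u < w) (hw : w ≤ 1) :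
    F w - F u ≤ (1 + M) * (F ((u + w) / 2) - F u) := by
  have := (hF.ratio u ((u + w) / 2) w hu (by linarith) hw (by ring)).2
  linarith

lemma sub_le_pow_mul_sub (hF : IsIncreasingQS F M) (t : ℕ) {u a w : ℝ} (hu : 0 ≤ u)
    (hua : u ≤ a) (haw : a ≤ w) (hw : w ≤ 1) (h : w - u ≤ 2 ^ t * (a - u)) :
    F w - F u ≤ (1 + M) ^ t * (F a - F u) := by
  induction t generalizing w with
  | zero =>
    obtain rfl : a = w := le_antisymm haw (by linarith)
    simp
  | succ t ih =>
    have hFa : F u ≤ F a := hF.mono hu hua (haw.trans hw)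
    rcases hua.lt_or_eq with hua' | rfl
    · have hmw : (u + w) / 2 ≤ w := by linarith
      have hmid := hF.sub_le_one_add_mul_sub_midpoint hu (hua'.trans_le haw) hw
      rcases le_total a ((u + w) / 2) with ham | ham
      · have := ih ham (hmw.trans hw) (by rw [pow_succ] at h; linarith)
        calc F w - F u ≤ (1 + M) * (F ((u + w) / 2) - F u) := hmid
          _ ≤ (1 + M) * ((1 + M) ^ t * (F a - F u)) := by
            gcongr; linarith [hF.one_le]
          _ = (1 + M) ^ (t + 1) * (F a - F u) := by ring
      · have hFm : F ((u + w) / 2) ≤ F a := hF.mono (by linarith) ham (haw.trans hw)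
        have hM : 1 + M ≤ (1 + M) ^ (t + 1) := le_self_pow₀ (by linarith [hF.one_le]) (by simp)
        calc F w - F u ≤ (1 + M) * (F a - F u) := by nlinarith [hF.one_le]
          _ ≤ (1 + M) ^ (t + 1) * (F a - F u) := by gcongr
    · obtain rfl : u = w := le_antisymm haw (by nlinarith [pow_pos (two_pos (α := ℝ)) (t + 1)])
      simp

-- Each doubling `y + 2 ^ T * s ↦ y + 2 ^ (T + 1) * s` adds at least `M⁻¹ * (F (y + s) - F y)`.
lemma mul_sub_le_sub_of_doubling (hF : IsIncreasingQS F M) (T : ℕ) {y s : ℝ} (hy : 0 ≤ y)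
    (hs : 0 < s) (h1 : y + 2 ^ T * s ≤ 1) :
    T * (M⁻¹ * (F (y + s) - F y)) ≤ F (y + 2 ^ T * s) - F (y + s) := by
  induction T with
  | zero => simp
  | succ T ih =>
    have hT : (1 : ℝ) ≤ 2 ^ T := one_le_pow₀ one_le_two
    rw [pow_succ] at h1 ⊢
    have hstep := (hF.ratio y (y + 2 ^ T * s) (y + 2 ^ T * 2 * s) hy
      (lt_add_of_pos_right y (by positivity)) (by linarith) (by ring)).1
    have hFz : F (y + s) - F y ≤ F (y + 2 ^ T * s) - F y := by
      linarith [hF.mono (by linarith) (by nlinarith : y + s ≤ y + 2 ^ T * s) (by nlinarith)]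
    have := mul_le_mul_of_nonneg_left hFz (inv_nonneg.2 hF.pos.le)
    push_cast
    linarith [ih (by nlinarith)]

lemma sub_le_two_pow_mul_of_image_sub_le (hF : IsIncreasingQS F M) {y p q : ℝ} (hy : 0 ≤ y)
    (hyp : y < p) (hq : q ≤ 1) (hpos : 0 < F p - F y)
    (himg : F q - F p ≤ F p - F y) :
    q - p ≤ 2 ^ (⌊M⌋₊ + 1) * (p - y) := by
  by_contra! hlong
  set T := ⌊M⌋₊ + 1
  have hz : y + 2 ^ T * (p - y) ≤ q := by linarith
  have hgrowth := hF.mul_sub_le_sub_of_doubling T hy (sub_pos.2 hyp) (by linarith)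
  rw [add_sub_cancel] at hgrowth
  have hFz := hF.mono (by positivity) hz hq
  have hTM : (T : ℝ) * M⁻¹ ≤ 1 := le_of_mul_le_mul_right (by nlinarith) hpos
  rw [← div_eq_mul_inv, div_le_one hF.pos] at hTM
  have : M < T := by simpa [T] using Nat.lt_floor_add_one M
  linarith

lemma sub_le_pow_mul_sub_of_image_sub_eq (hF : IsIncreasingQS F M) (hG : IsIncreasingQS G N)
    {y p q : ℝ} (hy : 0 ≤ y) (hyp : y < p) (hpq : p < q) (hq : q ≤ 1)
    (hpos : 0 < F p - F y) (heq : F q - F p = F p - F y) :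
    G q - G p ≤ (1 + N) ^ (⌊M⌋₊ + 2) * (G p - G y) := by
  have hlen := hF.sub_le_two_pow_mul_of_image_sub_le hy hyp hq hpos heq.le
  have hGq := hG.sub_le_pow_mul_sub (⌊M⌋₊ + 2) hy hyp.le hpq.le hq (by
    rw [pow_succ]; nlinarith [one_le_pow₀ (M₀ := ℝ) one_le_two (n := ⌊M⌋₊ + 1)])
  linarith [hG.mono hy hyp.le (hpq.le.trans hq)]

lemma sub_le_pow_mul_sub_of_image_sub_eq' (hF : IsIncreasingQS F M) (hG : IsIncreasingQS G N)
    {y p q : ℝ} (hy : 0 ≤ y) (hyp : y < p) (hpq : p < q) (hq : q ≤ 1)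
    (hpos : 0 < F p - F y) (heq : F q - F p = F p - F y) :
    G p - G y ≤ (1 + N) ^ (⌊M⌋₊ + 2) * (G q - G p) := by
  have := hF.reflect.sub_le_pow_mul_sub_of_image_sub_eq hG.reflect (y := 1 - q) (p := 1 - p)
    (q := 1 - y) (by linarith) (by linarith) (by linarith) (by linarith)
    (by simp only [_root_.sub_sub_cancel]; linarith)
    (by simp only [_root_.sub_sub_cancel]; linarith)
  simp only [_root_.sub_sub_cancel] at this
  linarith

end IsIncreasingQS

def dyadicFitLevels (a b : ℝ) : Set ℕ :=
  {j | ∃ l : ℕ, l < 2 ^ j ∧ a ≤ l / 2 ^ j ∧ (l + 1) / 2 ^ j ≤ b}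

-- The index `j₀` of `[a, b]` with respect to the dyadic grid (cf. `setOf_dyadic_subset_Icc`).
def fitLevel (a b : ℝ) : ℕ := sInf (dyadicFitLevels a b)

section FitLevel

variable {a b : ℝ}

lemma one_div_two_pow_le_of_mem_dyadicFitLevels {j : ℕ} (hj : j ∈ dyadicFitLevels a b) :
    1 / 2 ^ j ≤ b - a := by
  obtain ⟨l, -, hal, hlb⟩ := hj
  have : ((l : ℝ) + 1) / 2 ^ j = l / 2 ^ j + 1 / 2 ^ j := by ring
  linarith

lemma mem_dyadicFitLevels_of_two_div_le (ha : 0 ≤ a) (hb : b ≤ 1) {j : ℕ}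
    (h : 2 / 2 ^ j ≤ b - a) : j ∈ dyadicFitLevels a b := by
  have hp : (0 : ℝ) < 2 ^ j := by positivity
  rw [div_le_iff₀ hp] at h
  have hceil := Nat.ceil_lt_add_one (mul_nonneg ha hp.le)
  have hup : ((⌈a * 2 ^ j⌉₊ : ℝ) + 1) ≤ b * 2 ^ j := by nlinarith
  refine ⟨⌈a * 2 ^ j⌉₊, ?_, ?_, ?_⟩
  · have : ((⌈a * 2 ^ j⌉₊ + 1 : ℕ) : ℝ) ≤ (2 ^ j : ℕ) := by push_cast; nlinarith
    exact Nat.lt_of_succ_le (by exact_mod_cast this)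
  · rw [le_div_iff₀ hp]
    exact Nat.le_ceil _
  · rwa [div_le_iff₀ hp]

lemma fitLevel_mem (ha : 0 ≤ a) (hab : a < b) (hb : b ≤ 1) :
    fitLevel a b ∈ dyadicFitLevels a b := by
  obtain ⟨j, hj⟩ := pow_unbounded_of_one_lt (2 / (b - a)) one_lt_two
  refine Nat.sInf_mem ⟨j, mem_dyadicFitLevels_of_two_div_le ha hb ?_⟩
  rw [div_lt_iff₀ (sub_pos.2 hab)] at hj
  rw [div_le_iff₀ (by positivity)]
  linarith

lemma one_div_two_pow_fitLevel_le (ha : 0 ≤ a) (hab : a < b) (hb : b ≤ 1) :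
    1 / 2 ^ fitLevel a b ≤ b - a :=
  one_div_two_pow_le_of_mem_dyadicFitLevels (fitLevel_mem ha hab hb)

lemma sub_le_four_div_two_pow_fitLevel (ha : 0 ≤ a) (hb : b ≤ 1) :
    b - a ≤ 4 / 2 ^ fitLevel a b := by
  rcases Nat.eq_zero_or_eq_succ_pred (fitLevel a b) with h0 | hsucc
  · rw [h0]; norm_num; linarith
  · have hnot : (fitLevel a b).pred ∉ dyadicFitLevels a b :=
      Nat.notMem_of_lt_sInf (show _ < fitLevel a b by omega)
    have := mt (mem_dyadicFitLevels_of_two_div_le ha hb) hnot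
    rw [hsucc, pow_succ]
    field_simp at this ⊢
    linarith

lemma fitLevel_le_add {a' b' C : ℝ} {d : ℕ} (ha : 0 ≤ a) (hb : b ≤ 1)
    (ha' : 0 ≤ a') (hab' : a' < b') (hb' : b' ≤ 1) (hC : 0 ≤ C)
    (hlen : b' - a' ≤ C * (b - a)) (hd : 4 * C ≤ 2 ^ d) :
    fitLevel a b ≤ fitLevel a' b' + d := by
  have h1 := one_div_two_pow_fitLevel_le ha' hab' hb'
  have h2 := sub_le_four_div_two_pow_fitLevel ha hb
  have h3 : (1 : ℝ) / 2 ^ fitLevel a' b' ≤ 2 ^ d / 2 ^ fitLevel a b :=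
    calc (1 : ℝ) / 2 ^ fitLevel a' b' ≤ C * (4 / 2 ^ fitLevel a b) := by
          nlinarith [mul_le_mul_of_nonneg_left h2 hC]
      _ ≤ 2 ^ d / 2 ^ fitLevel a b := by
          rw [← mul_div_assoc, mul_comm C]; gcongr
  rw [div_le_div_iff₀ (by positivity) (by positivity), one_mul, ← pow_add] at h3
  have := (_root_.pow_le_pow_iff_right₀ (one_lt_two (α := ℝ))).1 h3
  omega

end FitLevel

lemma le_add_card_mul_of_step_le (v : ℕ → ℕ) {d N : ℕ}
    (hstep : ∀ i, i + 1 < N → v (i + 1) ≤ v i + d ∧ v i ≤ v (i + 1) + d) {i i' : ℕ}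
    (hi : i < N) (hi' : i' < N) : v i' ≤ v i + ((Finset.range N).image v).card * d := by
  induction N generalizing i i' with
  | zero => omega
  | succ N ih =>
    have ih := @ih fun i hi => hstep i (by omega)
    rw [Finset.range_add_one, Finset.image_insert]
    by_cases hmem : v N ∈ (Finset.range N).image v
    · obtain ⟨j, hj, hvj⟩ := Finset.mem_image.1 hmem
      rw [Finset.mem_range] at hj
      rw [Finset.insert_eq_of_mem hmem]
      have hv : ∀ m < N + 1, ∃ m' < N, v m = v m' := fun m hm => by
        rcases Nat.lt_succ_iff_lt_or_eq.1 hm with hm | rfl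
        exacts [⟨m, hm, rfl⟩, ⟨j, hj, hvj.symm⟩]
      obtain ⟨m, hm, hvm⟩ := hv i hi
      obtain ⟨m', hm', hvm'⟩ := hv i' hi'
      rw [hvm, hvm']
      exact ih hm hm'
    · rw [Finset.card_insert_of_notMem hmem, add_one_mul]
      set c := ((Finset.range N).image v).card
      have hnew : ∀ m < N, v N ≤ v m + (c * d + d) ∧ v m ≤ v N + (c * d + d) := fun m hm => by
        have := hstep (N - 1) (by omega)
        rw [Nat.sub_add_cancel (by omega)] at this
        have := @ih m (N - 1) hm (by omega)
        have := @ih (N - 1) m (by omega) hm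
        omega
      rcases Nat.lt_succ_iff_lt_or_eq.1 hi with hi | rfl <;>
        rcases Nat.lt_succ_iff_lt_or_eq.1 hi' with hi' | rfl
      · linarith [ih hi hi']
      · exact (hnew i hi).1
      · exact (hnew i' hi').2
      · omega

def dyadicPoint (k i : ℕ) : unitInterval := projIcc 0 1 zero_le_one ((i : ℝ) / 2 ^ k)

section DyadicPoint

variable {k i : ℕ}

lemma coe_dyadicPoint (hi : i ≤ 2 ^ k) : (dyadicPoint k i : ℝ) = i / 2 ^ k := by
  rw [dyadicPoint, projIcc_of_mem]
  exact ⟨by positivity, div_le_one_of_le₀ (by exact_mod_cast hi) (by positivity)⟩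

lemma dyadicPoint_of_le (hi : 2 ^ k ≤ i) : dyadicPoint k i = 1 :=
  projIcc_of_right_le _ ((one_le_div (by positivity)).2 (by exact_mod_cast hi))

lemma dyadicPoint_zero : dyadicPoint k 0 = 0 := by simp [dyadicPoint]

lemma monotone_dyadicPoint : Monotone (dyadicPoint k) := fun i j hij =>
  monotone_projIcc _ (by gcongr)

lemma dyadicPoint_lt {i' : ℕ} (h : i < i') (hi' : i' ≤ 2 ^ k) :
    dyadicPoint k i < dyadicPoint k i' := by
  rw [← Subtype.coe_lt_coe, coe_dyadicPoint (h.le.trans hi'), coe_dyadicPoint hi']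
  gcongr

lemma symm_dyadicPoint (hi : i ≤ 2 ^ k) :
    unitInterval.symm (dyadicPoint k i) = dyadicPoint k (2 ^ k - i) := by
  rw [dyadicPoint, unitInterval.symm_projIcc, dyadicPoint, Nat.cast_sub hi]
  congr 1
  field_simp
  push_cast
  ring

lemma mem_dyadicGridN_two_iff {D : Set unitInterval} :
    D ∈ dyadicGridN 2 k ↔ ∃ i < 2 ^ k, D = Icc (dyadicPoint k i) (dyadicPoint k (i + 1)) := by
  have hcell : ∀ i : ℕ, i < 2 ^ k → {x : unitInterval | (i : ℝ) / ((2 : ℕ) : ℝ) ^ k ≤ x ∧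
      (x : ℝ) ≤ ((i : ℝ) + 1) / ((2 : ℕ) : ℝ) ^ k} =
      Icc (dyadicPoint k i) (dyadicPoint k (i + 1)) := fun i hi => by
    ext x
    simp only [mem_ofPred_eq, mem_Icc, ← Subtype.coe_le_coe, coe_dyadicPoint hi.le,
      coe_dyadicPoint hi]
    push_cast
    rfl
  simp only [dyadicGridN]
  constructor <;> rintro ⟨i, hi, rfl⟩ <;> exact ⟨i, hi, by rw [hcell i hi]⟩

lemma setOf_dyadic_subset_Icc (A B : unitInterval) :
    {j | ∃ D ∈ dyadicGridN 2 j, D ⊆ Icc A B} = dyadicFitLevels A B := by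
  ext j
  simp only [mem_ofPred_eq, mem_dyadicGridN_two_iff, dyadicFitLevels]
  constructor
  · rintro ⟨_, ⟨l, hl, rfl⟩, hsub⟩
    rw [Icc_subset_Icc_iff (monotone_dyadicPoint l.le_succ), ← Subtype.coe_le_coe,
      ← Subtype.coe_le_coe, coe_dyadicPoint hl.le, coe_dyadicPoint hl] at hsub
    exact ⟨l, hl, by simpa using hsub⟩
  · rintro ⟨l, hl, hA, hB⟩
    refine ⟨_, ⟨l, hl, rfl⟩, ?_⟩
    rw [Icc_subset_Icc_iff (monotone_dyadicPoint l.le_succ), ← Subtype.coe_le_coe,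
      ← Subtype.coe_le_coe, coe_dyadicPoint hl.le, coe_dyadicPoint hl]
    exact ⟨hA, by simpa using hB⟩

end DyadicPoint

section GridTranslation

variable {P : ℕ → Set (Set unitInterval)} {h : unitInterval ≃ₜ unitInterval}

lemma mem_iff_of_imageGrid_eq (hgrid : ∀ k, imageGrid h P k = dyadicGridN 2 k) {k : ℕ}
    {Q : Set unitInterval} : Q ∈ P k ↔ ∃ D ∈ dyadicGridN 2 k, Q = h.symm '' D := by
  rw [← hgrid k]
  constructor
  · intro hQ
    exact ⟨h '' Q, ⟨Q, hQ, rfl⟩, (h.toEquiv.symm_image_image Q).symm⟩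
  · rintro ⟨_, ⟨Q', hQ', rfl⟩, rfl⟩
    rwa [← h.coe_toEquiv, ← h.coe_symm_toEquiv, h.toEquiv.symm_image_image]

lemma closure_symm_image_of_mem_dyadicGridN {k : ℕ} {D : Set unitInterval}
    (hD : D ∈ dyadicGridN 2 k) : closure (h.symm '' D) = h.symm '' D := by
  obtain ⟨i, -, rfl⟩ := mem_dyadicGridN_two_iff.1 hD
  exact (h.symm.isClosed_image.2 isClosed_Icc).closure_eq

lemma image_Icc_of_strictMono (hm : StrictMono h) (a b : unitInterval) :
    h '' Icc a b = Icc (h a) (h b) :=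
  (hm.orderIsoOfSurjective h h.surjective).image_Icc a b

lemma strictMono_symm (hm : StrictMono h) : StrictMono h.symm := fun a b hab => by
  rw [← hm.lt_iff_lt]
  simpa using hab

lemma map_zero_of_strictMono (hm : StrictMono h) : h 0 = 0 :=
  (hm.orderIsoOfSurjective h h.surjective).map_bot

lemma map_one_of_strictMono (hm : StrictMono h) : h 1 = 1 :=
  (hm.orderIsoOfSurjective h h.surjective).map_top

end GridTranslation

section GridPair

variable {Pstar Pcirc : ℕ → Set (Set unitInterval)} {hstar hcirc : unitInterval ≃ₜ unitInterval}

lemma setOf_closure_subset_closure_eq (hgrid : ∀ k, imageGrid hstar Pstar k = dyadicGridN 2 k)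
    {k : ℕ} {D : Set unitInterval} (hD : D ∈ dyadicGridN 2 k) :
    {j | ∃ R ∈ Pstar j, closure R ⊆ closure (hcirc.symm '' D)} =
      {j | ∃ D' ∈ dyadicGridN 2 j, D' ⊆ hstar '' (hcirc.symm '' D)} := by
  ext j
  simp only [mem_ofPred_eq, mem_iff_of_imageGrid_eq hgrid]
  constructor
  · rintro ⟨_, ⟨D', hD', rfl⟩, hsub⟩
    refine ⟨D', hD', ?_⟩
    rw [closure_symm_image_of_mem_dyadicGridN hD', closure_symm_image_of_mem_dyadicGridN hD]
      at hsub
    exact (hstar.toEquiv.symm_image_subset _ _).1 hsub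
  · rintro ⟨D', hD', hsub⟩
    refine ⟨_, ⟨D', hD', rfl⟩, ?_⟩
    rw [closure_symm_image_of_mem_dyadicGridN hD', closure_symm_image_of_mem_dyadicGridN hD]
    exact (hstar.toEquiv.symm_image_subset _ _).2 hsub

lemma setOf_levels_eq (hms : StrictMono hstar) (hmc : StrictMono hcirc)
    (hgridstar : ∀ k, imageGrid hstar Pstar k = dyadicGridN 2 k)
    (hgridcirc : ∀ k, imageGrid hcirc Pcirc k = dyadicGridN 2 k) (k : ℕ) :
    {j : ℕ | ∃ Q ∈ Pcirc k, j = sInf {j' : ℕ | ∃ R ∈ Pstar j', closure R ⊆ closure Q}} =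
      ((Finset.range (2 ^ k)).image fun i => fitLevel (hstar (hcirc.symm (dyadicPoint k i)))
        (hstar (hcirc.symm (dyadicPoint k (i + 1))))) := by
  have hcell : ∀ i < 2 ^ k, sInf {j' : ℕ | ∃ R ∈ Pstar j', closure R ⊆
      closure (hcirc.symm '' Icc (dyadicPoint k i) (dyadicPoint k (i + 1)))} =
      fitLevel (hstar (hcirc.symm (dyadicPoint k i)))
        (hstar (hcirc.symm (dyadicPoint k (i + 1)))) := fun i hi => by
    rw [setOf_closure_subset_closure_eq hgridstar (mem_dyadicGridN_two_iff.2 ⟨i, hi, rfl⟩),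
      image_Icc_of_strictMono (strictMono_symm hmc), image_Icc_of_strictMono hms,
      setOf_dyadic_subset_Icc]
    rfl
  ext j
  simp only [mem_ofPred_eq, mem_iff_of_imageGrid_eq hgridcirc, mem_dyadicGridN_two_iff,
    Finset.coe_image, Finset.coe_range, mem_image, mem_Iio]
  constructor
  · rintro ⟨_, ⟨_, ⟨i, hi, rfl⟩, rfl⟩, rfl⟩
    exact ⟨i, hi, (hcell i hi).symm⟩
  · rintro ⟨i, hi, rfl⟩
    exact ⟨_, ⟨_, ⟨i, hi, rfl⟩, rfl⟩, (hcell i hi).symm⟩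

end GridPair

lemma isIncreasingQS_iccExtend {h : unitInterval → unitInterval} {M : ℝ}
    (hqs : QuasiSymmetricUI h M) (hm : StrictMono h) :
    IsIncreasingQS (IccExtend zero_le_one fun x => (h x : ℝ)) M where
  one_le := hqs.1
  monotoneOn x hx y hy hxy := by
    rw [IccExtend_of_mem _ _ hx, IccExtend_of_mem _ _ hy]
    exact hm.monotone hxy
  ratio y x z hy hyx hz hgap := by
    rw [IccExtend_of_mem _ _ ⟨hy, by linarith⟩, IccExtend_of_mem _ _ ⟨by linarith, by linarith⟩,
      IccExtend_of_mem _ _ ⟨by linarith, hz⟩]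
    obtain ⟨h1, h2⟩ := hqs.2 ⟨x, by linarith, by linarith⟩ ⟨y, hy, by linarith⟩
      ⟨z, by linarith, hz⟩ hyx hgap
    have hpos : (0 : ℝ) < h ⟨x, by linarith, by linarith⟩ - h ⟨y, hy, by linarith⟩ :=
      sub_pos.2 (hm (Subtype.mk_lt_mk.2 hyx))
    rw [le_div_iff₀ hpos] at h1
    rw [div_le_iff₀ hpos] at h2
    exact ⟨by linarith, h2⟩

section DyadicIncrements

variable {G : unitInterval → unitInterval} {K : ℝ} {k : ℕ} {x y : unitInterval}

lemma inv_mul_sub_le_of_dyadic_increments (hG : Monotone G) (hK : 0 ≤ K)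
    (hinc : ∀ i < 2 ^ (k + 2),
      K⁻¹ / 2 ^ (k + 2) ≤ (G (dyadicPoint (k + 2) (i + 1)) : ℝ) - G (dyadicPoint (k + 2) i))
    (hk1 : 2 ^ k * ((y : ℝ) - x) ≤ 1) (hk2 : 1 < 2 ^ k * 2 * ((y : ℝ) - x)) :
    (4 * K)⁻¹ * ((y : ℝ) - x) ≤ (G y : ℝ) - G x := by
  obtain ⟨l, hl, hxl, hly⟩ := mem_dyadicFitLevels_of_two_div_le x.2.1 y.2.2 (j := k + 2)
    (by rw [div_le_iff₀ (by positivity), pow_add]; norm_num; linarith)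
  have h1 : x ≤ dyadicPoint (k + 2) l := by
    rw [← Subtype.coe_le_coe, coe_dyadicPoint hl.le]; exact hxl
  have h2 : dyadicPoint (k + 2) (l + 1) ≤ y := by
    rw [← Subtype.coe_le_coe, coe_dyadicPoint hl]; push_cast; exact hly
  have hscale : (4 * K)⁻¹ * ((y : ℝ) - x) = K⁻¹ / 2 ^ (k + 2) * (2 ^ k * ((y : ℝ) - x)) := by
    rw [pow_add]; field_simp; ring
  calc (4 * K)⁻¹ * ((y : ℝ) - x) ≤ K⁻¹ / 2 ^ (k + 2) := by
        rw [hscale]; exact mul_le_of_le_one_right (by positivity) hk1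
    _ ≤ (G y : ℝ) - G x := by
        linarith [hinc l hl, Subtype.coe_le_coe.2 (hG h1), Subtype.coe_le_coe.2 (hG h2)]

lemma sub_le_mul_of_dyadic_increments (hG : Monotone G) (hK : 0 ≤ K)
    (hinc : ∀ i < 2 ^ k, (G (dyadicPoint k (i + 1)) : ℝ) - G (dyadicPoint k i) ≤ K / 2 ^ k)
    (hxy : (x : ℝ) < y) (hk1 : 2 ^ k * ((y : ℝ) - x) ≤ 1)
    (hk2 : 1 < 2 ^ k * 2 * ((y : ℝ) - x)) :
    (G y : ℝ) - G x ≤ 4 * K * ((y : ℝ) - x) := by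
  have hp : (0 : ℝ) < 2 ^ k := by positivity
  set i := ⌊(x : ℝ) * 2 ^ k⌋₊
  have hi : i < 2 ^ k :=
    (Nat.floor_lt (mul_nonneg x.2.1 hp.le)).2 (by push_cast; nlinarith [y.2.2])
  have h1 : dyadicPoint k i ≤ x := by
    rw [← Subtype.coe_le_coe, coe_dyadicPoint hi.le, div_le_iff₀ hp]
    exact Nat.floor_le (mul_nonneg x.2.1 hp.le)
  -- `dyadicPoint` clamps to `1`, so this also holds when `i + 2 > 2 ^ k`
  have h2 : y ≤ dyadicPoint k (i + 2) := by
    rw [← Subtype.coe_le_coe, dyadicPoint, coe_projIcc]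
    refine le_max_of_le_right (le_min y.2.2 ?_)
    rw [le_div_iff₀ hp]
    push_cast
    nlinarith [Nat.lt_floor_add_one ((x : ℝ) * 2 ^ k)]
  have hstep : ∀ m, (G (dyadicPoint k (m + 1)) : ℝ) - G (dyadicPoint k m) ≤ K / 2 ^ k := by
    intro m
    rcases lt_or_ge m (2 ^ k) with hm | hm
    · exact hinc m hm
    · rw [dyadicPoint_of_le hm, dyadicPoint_of_le (hm.trans m.le_succ), sub_self]
      positivity
  have hscale : 4 * K * ((y : ℝ) - x) - 2 * (K / 2 ^ k) =
      K / 2 ^ k * (2 * (2 ^ k * 2 * ((y : ℝ) - x) - 1)) := by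
    field_simp; ring
  nlinarith [Subtype.coe_le_coe.2 (hG h1), Subtype.coe_le_coe.2 (hG h2), hstep i, hstep (i + 1),
    mul_nonneg (div_nonneg hK hp.le) (by linarith : 0 ≤ 2 * (2 ^ k * 2 * ((y : ℝ) - x) - 1))]

lemma biLipschitzUI_of_dyadic_increments (hG : Monotone G) (hK : 1 ≤ K)
    (hinc : ∀ k i : ℕ, i < 2 ^ k →
      K⁻¹ / 2 ^ k ≤ (G (dyadicPoint k (i + 1)) : ℝ) - G (dyadicPoint k i) ∧
      (G (dyadicPoint k (i + 1)) : ℝ) - G (dyadicPoint k i) ≤ K / 2 ^ k) :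
    BiLipschitzUI G (4 * K) := by
  refine ⟨by linarith, fun x y => ?_⟩
  wlog hxy : (x : ℝ) ≤ y generalizing x y
  · rw [abs_sub_comm (x : ℝ), abs_sub_comm (G x : ℝ)]
    exact this y x (le_of_not_ge hxy)
  rw [abs_sub_comm (x : ℝ), abs_sub_comm (G x : ℝ), abs_of_nonneg (sub_nonneg.2 hxy),
    abs_of_nonneg (sub_nonneg.2 (Subtype.coe_le_coe.2 (hG (Subtype.coe_le_coe.1 hxy))))]
  rcases hxy.lt_or_eq with hxy | hxy
  · have hℓ : 0 < (y : ℝ) - x := sub_pos.2 hxy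
    obtain ⟨k, hk1, hk2⟩ := exists_nat_pow_near
      (one_le_one_div hℓ (by linarith [y.2.2, x.2.1])) (one_lt_two (α := ℝ))
    rw [le_div_iff₀ hℓ] at hk1
    rw [div_lt_iff₀ hℓ, pow_succ] at hk2
    exact ⟨inv_mul_sub_le_of_dyadic_increments hG (by linarith)
        (fun i hi => (hinc (k + 2) i hi).1) hk1 hk2,
      sub_le_mul_of_dyadic_increments hG (by linarith) (fun i hi => (hinc k i hi).2) hxy hk1 hk2⟩
  · obtain rfl := Subtype.ext hxy
    simp

end DyadicIncrements

section Levels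

variable {x : ℕ → ℝ} {k : ℕ}

lemma exists_fitLevel_le (hx : ∀ i < 2 ^ k, 0 ≤ x i ∧ x (i + 1) ≤ 1)
    (hsum : x (2 ^ k) - x 0 = 1) : ∃ i < 2 ^ k, fitLevel (x i) (x (i + 1)) ≤ k + 2 := by
  obtain ⟨i, hi, hle⟩ := Finset.exists_le_of_sum_le (s := Finset.range (2 ^ k))
    (f := fun _ => (1 : ℝ) / 2 ^ k) (g := fun i => x (i + 1) - x i) (by simp)
    (by rw [Finset.sum_range_sub, hsum]; simp)
  rw [Finset.mem_range] at hi
  refine ⟨i, hi, (_root_.pow_le_pow_iff_right₀ (one_lt_two (α := ℝ))).1 ?_⟩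
  have := hle.trans (sub_le_four_div_two_pow_fitLevel (hx i hi).1 (hx i hi).2)
  rw [div_le_div_iff₀ (by positivity) (by positivity)] at this
  rw [pow_add]
  linarith

lemma exists_le_fitLevel (hx : ∀ i < 2 ^ k, 0 ≤ x i ∧ x i < x (i + 1) ∧ x (i + 1) ≤ 1)
    (hsum : x (2 ^ k) - x 0 = 1) : ∃ i < 2 ^ k, k ≤ fitLevel (x i) (x (i + 1)) := by
  obtain ⟨i, hi, hle⟩ := Finset.exists_le_of_sum_le (s := Finset.range (2 ^ k))
    (f := fun i => x (i + 1) - x i) (g := fun _ => (1 : ℝ) / 2 ^ k) (by simp)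
    (by rw [Finset.sum_range_sub, hsum]; simp)
  rw [Finset.mem_range] at hi
  refine ⟨i, hi, (_root_.pow_le_pow_iff_right₀ (one_lt_two (α := ℝ))).1 ?_⟩
  have := (one_div_two_pow_fitLevel_le (hx i hi).1 (hx i hi).2.1 (hx i hi).2.2).trans hle
  rwa [div_le_div_iff₀ (by positivity) (by positivity), one_mul, one_mul] at this

lemma increment_bounds_of_card_fitLevels_le {n d : ℕ} {C : ℝ} (hC : 0 ≤ C) (hd : 4 * C ≤ 2 ^ d)
    (hx : ∀ i < 2 ^ k, 0 ≤ x i ∧ x i < x (i + 1) ∧ x (i + 1) ≤ 1)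
    (hsum : x (2 ^ k) - x 0 = 1)
    (hcomp : ∀ i, i + 1 < 2 ^ k → x (i + 2) - x (i + 1) ≤ C * (x (i + 1) - x i) ∧
      x (i + 1) - x i ≤ C * (x (i + 2) - x (i + 1)))
    (hn : ((Finset.range (2 ^ k)).image fun i => fitLevel (x i) (x (i + 1))).card ≤ n)
    {i : ℕ} (hi : i < 2 ^ k) :
    (2 ^ (n * d + 2))⁻¹ / 2 ^ k ≤ x (i + 1) - x i ∧ x (i + 1) - x i ≤ 2 ^ (n * d + 2) / 2 ^ k := by
  have hstep : ∀ i, i + 1 < 2 ^ k →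
      fitLevel (x (i + 1)) (x (i + 1 + 1)) ≤ fitLevel (x i) (x (i + 1)) + d ∧
      fitLevel (x i) (x (i + 1)) ≤ fitLevel (x (i + 1)) (x (i + 1 + 1)) + d := by
    intro i hi
    obtain ⟨h0, h01, h1⟩ := hx i (by omega)
    obtain ⟨-, h12, h2⟩ := hx (i + 1) hi
    exact ⟨fitLevel_le_add (h0.trans h01.le) h2 h0 h01 h1 hC (hcomp i hi).2 hd,
      fitLevel_le_add h0 h1 (h0.trans h01.le) h12 h2 hC (hcomp i hi).1 hd⟩
  have hosc : ∀ i < 2 ^ k, ∀ i' < 2 ^ k,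
      fitLevel (x i') (x (i' + 1)) ≤ fitLevel (x i) (x (i + 1)) + n * d := fun i hi i' hi' =>
    (le_add_card_mul_of_step_le (fun i => fitLevel (x i) (x (i + 1))) hstep hi hi').trans
      (by gcongr)
  obtain ⟨i₀, hi₀, hlow⟩ := exists_fitLevel_le (fun i hi => ⟨(hx i hi).1, (hx i hi).2.2⟩) hsum
  obtain ⟨i₁, hi₁, hhigh⟩ := exists_le_fitLevel hx hsum
  have hup : fitLevel (x i) (x (i + 1)) ≤ k + (n * d + 2) := by linarith [hosc i₀ hi₀ i hi]
  have hdown : k ≤ fitLevel (x i) (x (i + 1)) + n * d := by linarith [hosc i hi i₁ hi₁]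
  obtain ⟨h0, h01, h1⟩ := hx i hi
  constructor
  · refine le_trans ?_ (one_div_two_pow_fitLevel_le h0 h01 h1)
    rw [div_eq_mul_inv, ← mul_inv, ← pow_add, one_div, add_comm]
    exact inv_anti₀ (by positivity) (pow_le_pow_right₀ one_le_two hup)
  · refine (sub_le_four_div_two_pow_fitLevel h0 h1).trans ?_
    have := pow_le_pow_right₀ (one_le_two (α := ℝ)) hdown
    rw [pow_add] at this
    rw [div_le_div_iff₀ (by positivity) (by positivity), pow_add _ _ 2]
    linarith

end Levels

section Monotone

variable {hstar hcirc : unitInterval ≃ₜ unitInterval} {Mstar Mcirc : ℝ}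

lemma dyadic_increments_comparable (hms : StrictMono hstar) (hmc : StrictMono hcirc)
    (hqsstar : QuasiSymmetricUI hstar Mstar) (hqscirc : QuasiSymmetricUI hcirc Mcirc) {k i : ℕ}
    (hi : i + 1 < 2 ^ k) :
    let g := fun m => (hstar (hcirc.symm (dyadicPoint k m)) : ℝ)
    g (i + 2) - g (i + 1) ≤ (1 + Mstar) ^ (⌊Mcirc⌋₊ + 2) * (g (i + 1) - g i) ∧
      g (i + 1) - g i ≤ (1 + Mstar) ^ (⌊Mcirc⌋₊ + 2) * (g (i + 2) - g (i + 1)) := by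
  have hFc := isIncreasingQS_iccExtend hqscirc hmc
  have hFs := isIncreasingQS_iccExtend hqsstar hms
  have hval : ∀ m ≤ 2 ^ k, IccExtend zero_le_one (fun x => (hcirc x : ℝ))
      (hcirc.symm (dyadicPoint k m)) = m / 2 ^ k := fun m hm => by
    rw [IccExtend_val, Homeomorph.apply_symm_apply, coe_dyadicPoint hm]
  have hlt : ∀ m, m + 1 ≤ 2 ^ k →
      (hcirc.symm (dyadicPoint k m) : ℝ) < hcirc.symm (dyadicPoint k (m + 1)) := fun m hm =>
    strictMono_symm hmc (dyadicPoint_lt m.lt_succ_self hm)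
  have hpos : 0 < (i + 1 : ℕ) / (2 : ℝ) ^ k - i / 2 ^ k := by
    rw [← sub_div]; push_cast; ring_nf; positivity
  have heq : (i + 2 : ℕ) / (2 : ℝ) ^ k - (i + 1 : ℕ) / 2 ^ k = (i + 1 : ℕ) / 2 ^ k - i / 2 ^ k := by
    push_cast; ring
  rw [← hval i (by omega), ← hval (i + 1) (by omega)] at hpos heq
  rw [← hval (i + 2) (by omega)] at heq
  have h1 := hFc.sub_le_pow_mul_sub_of_image_sub_eq hFs (hcirc.symm _).2.1 (hlt i (by omega))
    (hlt (i + 1) (by omega)) (hcirc.symm _).2.2 hpos heq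
  have h2 := hFc.sub_le_pow_mul_sub_of_image_sub_eq' hFs (hcirc.symm _).2.1 (hlt i (by omega))
    (hlt (i + 1) (by omega)) (hcirc.symm _).2.2 hpos heq
  simp only [IccExtend_val] at h1 h2
  exact ⟨h1, h2⟩

theorem exists_biLipschitzUI_of_strictMono {Pstar Pcirc : ℕ → Set (Set unitInterval)}
    (hms : StrictMono hstar) (hmc : StrictMono hcirc)
    (hqsstar : QuasiSymmetricUI hstar Mstar) (hqscirc : QuasiSymmetricUI hcirc Mcirc)
    (hgridstar : ∀ k, imageGrid hstar Pstar k = dyadicGridN 2 k)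
    (hgridcirc : ∀ k, imageGrid hcirc Pcirc k = dyadicGridN 2 k)
    (hbounded : ∃ n : ℕ, ∀ k : ℕ,
      {j : ℕ | ∃ Q ∈ Pcirc k,
        j = sInf {j' : ℕ | ∃ R ∈ Pstar j', closure R ⊆ closure Q}}.ncard ≤ n) :
    ∃ L : ℝ, BiLipschitzUI (fun x => hstar (hcirc.symm x)) L := by
  obtain ⟨n, hn⟩ := hbounded
  have hG : StrictMono (hcirc.symm.trans hstar) := hms.comp (strictMono_symm hmc)
  have hC : 0 ≤ (1 + Mstar) ^ (⌊Mcirc⌋₊ + 2) := pow_nonneg (by linarith [hqsstar.1]) _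
  obtain ⟨d, hd⟩ := pow_unbounded_of_one_lt (4 * (1 + Mstar) ^ (⌊Mcirc⌋₊ + 2)) one_lt_two
  refine ⟨4 * 2 ^ (n * d + 2), biLipschitzUI_of_dyadic_increments hG.monotone
    (one_le_pow₀ one_le_two) fun k i hi => increment_bounds_of_card_fitLevels_le hC hd.le
    (fun i hi => ⟨(hstar _).2.1, hG (dyadicPoint_lt i.lt_succ_self hi), (hstar _).2.2⟩) ?_
    (fun i hi => dyadic_increments_comparable hms hmc hqsstar hqscirc hi) ?_ hi⟩
  · simp [dyadicPoint_of_le le_rfl, dyadicPoint_zero, map_zero_of_strictMono hms,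
      map_one_of_strictMono hms, map_zero_of_strictMono (strictMono_symm hmc),
      map_one_of_strictMono (strictMono_symm hmc)]
  · have hnk := hn k
    rwa [setOf_levels_eq hms hmc hgridstar hgridcirc, Set.ncard_coe_finset] at hnk

end Monotone

section Reflection

lemma abs_symm_sub_symm (a b : unitInterval) :
    |(unitInterval.symm a : ℝ) - unitInterval.symm b| = |(a : ℝ) - b| := by
  rw [unitInterval.coe_symm_eq, unitInterval.coe_symm_eq, abs_sub_comm]
  ring_nf

lemma image_symm_Icc (a b : unitInterval) :
    unitInterval.symm '' Icc a b = Icc (unitInterval.symm b) (unitInterval.symm a) := by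
  ext x
  rw [unitInterval.symm_involutive.image_eq_preimage_symm]
  simp only [mem_preimage, mem_Icc, unitInterval.le_symm_comm, unitInterval.symm_le_comm, and_comm]

lemma image_symm_mem_dyadicGridN {k : ℕ} {D : Set unitInterval} (hD : D ∈ dyadicGridN 2 k) :
    unitInterval.symm '' D ∈ dyadicGridN 2 k := by
  obtain ⟨i, hi, rfl⟩ := mem_dyadicGridN_two_iff.1 hD
  refine mem_dyadicGridN_two_iff.2 ⟨2 ^ k - (i + 1), by omega, ?_⟩
  rw [image_symm_Icc, symm_dyadicPoint hi, symm_dyadicPoint hi.le,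
    show 2 ^ k - i = 2 ^ k - (i + 1) + 1 by omega]

lemma imageGrid_symm_comp {h : unitInterval → unitInterval} {P : ℕ → Set (Set unitInterval)}
    (hgrid : ∀ k, imageGrid h P k = dyadicGridN 2 k) (k : ℕ) :
    imageGrid (fun x => unitInterval.symm (h x)) P k = dyadicGridN 2 k := by
  have : imageGrid (fun x => unitInterval.symm (h x)) P k =
      (unitInterval.symm '' ·) '' imageGrid h P k := by
    simp only [imageGrid, image_image]
  rw [this, hgrid k]
  ext D
  constructor
  · rintro ⟨D', hD', rfl⟩
    exact image_symm_mem_dyadicGridN hD'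
  · intro hD
    refine ⟨_, image_symm_mem_dyadicGridN hD, ?_⟩
    simp [image_image, unitInterval.symm_symm]

lemma QuasiSymmetricUI.symm_comp {h : unitInterval → unitInterval} {M : ℝ}
    (hqs : QuasiSymmetricUI h M) : QuasiSymmetricUI (fun x => unitInterval.symm (h x)) M := by
  refine ⟨hqs.1, fun x y z hyx hgap => ?_⟩
  simp only [unitInterval.coe_symm_eq, _root_.sub_sub_sub_cancel_left]
  rw [← neg_div_neg_eq, neg_sub, neg_sub]
  exact hqs.2 x y z hyx hgap

lemma BiLipschitzUI.of_symm_comp {g : unitInterval → unitInterval} {L : ℝ}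
    (hg : BiLipschitzUI (fun x => unitInterval.symm (g x)) L) : BiLipschitzUI g L :=
  ⟨hg.1, fun x y => by simpa only [abs_symm_sub_symm] using hg.2 x y⟩

lemma BiLipschitzUI.of_comp_symm {g : unitInterval → unitInterval} {L : ℝ}
    (hg : BiLipschitzUI (fun x => g (unitInterval.symm x)) L) : BiLipschitzUI g L :=
  ⟨hg.1, fun x y => by
    simpa only [abs_symm_sub_symm, unitInterval.symm_symm] using
      hg.2 (unitInterval.symm x) (unitInterval.symm y)⟩

end Reflection

theorem exists_biLipschitzUI_of_strictMono_star {Pstar Pcirc : ℕ → Set (Set unitInterval)}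
    {hstar hcirc : unitInterval ≃ₜ unitInterval} {Mstar Mcirc : ℝ} (hms : StrictMono hstar)
    (hqsstar : QuasiSymmetricUI hstar Mstar) (hqscirc : QuasiSymmetricUI hcirc Mcirc)
    (hgridstar : ∀ k, imageGrid hstar Pstar k = dyadicGridN 2 k)
    (hgridcirc : ∀ k, imageGrid hcirc Pcirc k = dyadicGridN 2 k)
    (hbounded : ∃ n : ℕ, ∀ k : ℕ,
      {j : ℕ | ∃ Q ∈ Pcirc k,
        j = sInf {j' : ℕ | ∃ R ∈ Pstar j', closure R ⊆ closure Q}}.ncard ≤ n) :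
    ∃ L : ℝ, BiLipschitzUI (fun x => hstar (hcirc.symm x)) L := by
  rcases hcirc.continuous.strictMono_of_inj_boundedOrder' hcirc.injective with hmc | hac
  · exact exists_biLipschitzUI_of_strictMono hms hmc hqsstar hqscirc hgridstar hgridcirc hbounded
  · obtain ⟨L, hL⟩ := exists_biLipschitzUI_of_strictMono (hcirc := hcirc.trans
      unitInterval.symmHomeomorph) hms (unitInterval.strictAnti_symm.comp hac) hqsstar
      hqscirc.symm_comp hgridstar (imageGrid_symm_comp hgridcirc) hbounded
    exact ⟨L, BiLipschitzUI.of_comp_symm hL⟩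

theorem statement_17_general
    (Pstar Pcirc : ℕ → Set (Set unitInterval))
    (hstar hcirc : unitInterval ≃ₜ unitInterval) (Mstar Mcirc : ℝ)
    (hqsstar : QuasiSymmetricUI hstar Mstar) (hqscirc : QuasiSymmetricUI hcirc Mcirc)
    (hgridstar : ∀ k, imageGrid hstar Pstar k = dyadicGridN 2 k)
    (hgridcirc : ∀ k, imageGrid hcirc Pcirc k = dyadicGridN 2 k)
    (hbounded : ∃ n : ℕ, ∀ k : ℕ,
      {j : ℕ | ∃ Q ∈ Pcirc k,
        j = sInf {j' : ℕ | ∃ R ∈ Pstar j', closure R ⊆ closure Q}}.ncard ≤ n) :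
    ∃ L : ℝ, BiLipschitzUI (fun x => hstar (hcirc.symm x)) L := by
  rcases hstar.continuous.strictMono_of_inj_boundedOrder' hstar.injective with hms | has
  · exact exists_biLipschitzUI_of_strictMono_star hms hqsstar hqscirc hgridstar hgridcirc hbounded
  · obtain ⟨L, hL⟩ := exists_biLipschitzUI_of_strictMono_star (hstar := hstar.trans
      unitInterval.symmHomeomorph) (unitInterval.strictAnti_symm.comp has) hqsstar.symm_comp
      hqscirc (imageGrid_symm_comp hgridstar) hgridcirc hbounded
    exact ⟨L, BiLipschitzUI.of_symm_comp hL⟩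

theorem statement_17
    (Pstar Pcirc : ℕ → Set (Set unitInterval))
    (lamhat₁ lam₁ lamhat₂ lam₂ Cqs₁ Cqs₂ : ℝ)
    (hGstar : IsGoodGrid mUI Pstar lamhat₁ lam₁)
    (hGcirc : IsGoodGrid mUI Pcirc lamhat₂ lam₂)
    (hQSstar : IsQSGrid Pstar Cqs₁) (hQScirc : IsQSGrid Pcirc Cqs₂)
    (hchildstar : ∀ k, ∀ Q ∈ Pstar k, {R | R ∈ Pstar (k + 1) ∧ R ⊆ Q}.ncard = 2)
    (hchildcirc : ∀ k, ∀ Q ∈ Pcirc k, {R | R ∈ Pcirc (k + 1) ∧ R ⊆ Q}.ncard = 2)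
    (hstar hcirc : unitInterval ≃ₜ unitInterval) (Mstar Mcirc : ℝ)
    (hqsstar : QuasiSymmetricUI hstar Mstar) (hqscirc : QuasiSymmetricUI hcirc Mcirc)
    (hgridstar : ∀ k, imageGrid hstar Pstar k = dyadicGridN 2 k)
    (hgridcirc : ∀ k, imageGrid hcirc Pcirc k = dyadicGridN 2 k)
    (hbounded : ∃ n : ℕ, ∀ k : ℕ,
      {j : ℕ | ∃ Q ∈ Pcirc k,
        j = sInf {j' : ℕ | ∃ R ∈ Pstar j', closure R ⊆ closure Q}}.ncard ≤ n) :
    ∃ L : ℝ, BiLipschitzUI (fun x => hstar (hcirc.symm x)) L :=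
  statement_17_general Pstar Pcirc hstar hcirc Mstar Mcirc hqsstar hqscirc hgridstar hgridcirc
    hbounded

end BesovPaper
end
end
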